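/- Let n ≥ 1, let V ⊆ ℂⁿ ⊕ ℂⁿ be a maximal isotropic subspace (isotropic of dimension n for B), and let w₁, w₂ ∈ Λ(ℂⁿ) be nonzero elements with d_{(β,γ)} w₁ = 0 and d_{(β,γ)} w₂ = 0 for every (β,γ) ∈ V. Then there exists a nonzero constant c ∈ ℂ with w₂ = c · w₁. -/

import Mathlib

open Matrix

noncomputable section

/-- The symmetric bilinear form `B((β,γ),(β',γ')) = Σ_t (β_t γ'_t + β'_t γ_t)` on `ℂⁿ ⊕ ℂⁿ`. -/
def Bform (n : ℕ) (p q : (Fin n → ℂ) × (Fin n → ℂ)) : ℂ :=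
  ∑ t, (p.1 t * q.2 t + q.1 t * p.2 t)

/-- The Grassmann (exterior) algebra `Λ(ℂⁿ)` on `n` generators. -/
abbrev GA (n : ℕ) := ExteriorAlgebra ℂ (Fin n → ℂ)

/-- `x_t` : left exterior multiplication by the `t`-th standard basis vector `e_t`. -/
noncomputable def Xop (n : ℕ) (t : Fin n) : GA n →ₗ[ℂ] GA n :=
  LinearMap.mulLeft ℂ (ExteriorAlgebra.ι ℂ (Pi.single t 1))

/-- `∂_t` : left interior multiplication (contraction) with the `t`-th dual basis vector. -/
noncomputable def Dop (n : ℕ) (t : Fin n) : GA n →ₗ[ℂ] GA n :=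
  CliffordAlgebra.contractLeft (LinearMap.proj t)

/-- The operator `d_{(β,γ)} = Σ_t (β_t ∂_t + γ_t x_t)` on `Λ(ℂⁿ)`. -/
noncomputable def dOp (n : ℕ) (p : (Fin n → ℂ) × (Fin n → ℂ)) : GA n →ₗ[ℂ] GA n :=
  ∑ t, (p.1 t • Dop n t + p.2 t • Xop n t)

/-!
Pick a basis `f i` of `V` and, `B` being nondegenerate, vectors `g j` with `B (f i) (g j) = δᵢⱼ`.
Since `d_p d_q + d_q d_p = B(p, q)`, the annihilators `a i = d_{f i}` and their partners
`a' j = d_{g j}` satisfy `a i a j + a j a i = 0` and `a i a' j + a' j a i = δᵢⱼ`. Then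
`P = ∏ a i a' i` is a projection onto the common kernel `W` of the `a i`, and cyclicity of the
trace gives `tr (a i a' i Q) = tr Q / 2` whenever `Q` commutes with `a i`. Hence
`2ⁿ dim W = 2ⁿ tr P = dim Λ(ℂⁿ) = 2ⁿ`, so `W` is a line containing `w₁` and `w₂`.
-/

open Module

section Anticommutation

variable {R ι : Type*} [Ring R]

/-- The canonical anticommutation relations, except that the partners `a' i` need not
anticommute with each other. -/
structure IsCAR (a a' : ι → R) : Prop where
  mul_self : ∀ i, a i * a i = 0
  anticomm : ∀ i j, i ≠ j → a i * a j + a j * a i = 0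
  anticomm_partner : ∀ i j, i ≠ j → a i * a' j + a' j * a i = 0
  anticomm_partner_self : ∀ i, a i * a' i + a' i * a i = 1

def vacuumProj (a a' : ι → R) (l : List ι) : R :=
  (l.map fun i => a i * a' i).prod

@[simp]
theorem vacuumProj_nil (a a' : ι → R) : vacuumProj a a' [] = 1 := rfl

theorem vacuumProj_cons (a a' : ι → R) (i : ι) (l : List ι) :
    vacuumProj a a' (i :: l) = a i * a' i * vacuumProj a a' l := List.prod_cons

namespace IsCAR

variable {a a' : ι → R} (h : IsCAR a a')
include h

theorem commute_mul {i j : ι} (hij : i ≠ j) : Commute (a i) (a j * a' j) := by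
  have hj : a i * a j = -(a j * a i) := eq_neg_of_add_eq_zero_left (h.anticomm i j hij)
  have hj' : a i * a' j = -(a' j * a i) := eq_neg_of_add_eq_zero_left (h.anticomm_partner i j hij)
  calc a i * (a j * a' j) = -(a j * (a i * a' j)) := by rw [← mul_assoc, hj, neg_mul, mul_assoc]
    _ = a j * a' j * a i := by rw [hj', mul_neg, neg_neg, mul_assoc]

theorem commute_vacuumProj {i : ι} {l : List ι} (hi : i ∉ l) :
    Commute (a i) (vacuumProj a a' l) :=
  Commute.list_prod_right _ _ fun _ hx => by
    obtain ⟨j, hj, rfl⟩ := List.mem_map.1 hx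
    exact h.commute_mul fun hij => hi (hij ▸ hj)

theorem mul_vacuumProj_eq_zero {i : ι} {l : List ι} (hi : i ∈ l) :
    a i * vacuumProj a a' l = 0 := by
  induction l with
  | nil => cases hi
  | cons j l ih =>
    rw [vacuumProj_cons, ← mul_assoc]
    by_cases hij : i = j
    · rw [hij, ← mul_assoc, h.mul_self, zero_mul, zero_mul]
    · rw [(h.commute_mul hij).eq, mul_assoc, ih (List.mem_of_ne_of_mem hij hi), mul_zero]

theorem vacuumProj_smul {M : Type*} [AddCommGroup M] [Module R M] {w : M} (l : List ι)
    (hw : ∀ i, a i • w = 0) : vacuumProj a a' l • w = w := by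
  induction l with
  | nil => simp
  | cons j l ih =>
    rw [vacuumProj_cons, mul_smul, ih, eq_sub_of_add_eq (h.anticomm_partner_self j), sub_smul,
      one_smul, mul_smul, hw, smul_zero, sub_zero]

end IsCAR

end Anticommutation

section Trace

variable {K E ι : Type*} [CommRing K] [AddCommGroup E] [Module K E] [Module.Free K E]
  [Module.Finite K E] {a a' : ι → Module.End K E}

theorem IsCAR.two_pow_mul_trace_vacuumProj (h : IsCAR a a') {l : List ι} (hl : l.Nodup) :
    2 ^ l.length * LinearMap.trace K E (vacuumProj a a' l) = LinearMap.trace K E 1 := by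
  induction l with
  | nil => simp
  | cons i l ih =>
    obtain ⟨hi, hl⟩ := List.nodup_cons.1 hl
    set Q := vacuumProj a a' l
    have hhalf : 2 * LinearMap.trace K E (a i * a' i * Q) = LinearMap.trace K E Q := by
      have hcyc : LinearMap.trace K E (a i * a' i * Q) = LinearMap.trace K E (a' i * a i * Q) := by
        rw [mul_assoc, LinearMap.trace_mul_comm, mul_assoc, ← (h.commute_vacuumProj hi).eq,
          ← mul_assoc]
      rw [two_mul]
      nth_rewrite 2 [hcyc]
      rw [← map_add, ← add_mul, h.anticomm_partner_self, one_mul]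
    rw [vacuumProj_cons, List.length_cons, pow_succ, mul_assoc, hhalf, ih hl]

end Trace

theorem IsCAR.two_pow_card_mul_finrank_iInf_ker {K E ι : Type*} [Field K] [CharZero K]
    [AddCommGroup E] [Module K E] [FiniteDimensional K E] [Fintype ι]
    {a a' : ι → Module.End K E} (h : IsCAR a a') :
    2 ^ Fintype.card ι * finrank K ↥(⨅ i, LinearMap.ker (a i)) = finrank K E := by
  set l := (Finset.univ : Finset ι).toList
  have hproj : LinearMap.IsProj (⨅ i, LinearMap.ker (a i)) (vacuumProj a a' l) :=
    ⟨fun x => Submodule.mem_iInf _ |>.2 fun i =>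
        LinearMap.congr_fun (h.mul_vacuumProj_eq_zero (Finset.mem_toList.2 (Finset.mem_univ i))) x,
      fun x hx => h.vacuumProj_smul l fun i => (Submodule.mem_iInf _).1 hx i⟩
  have htrace := h.two_pow_mul_trace_vacuumProj (Finset.nodup_toList Finset.univ)
  rw [Finset.length_toList, Finset.card_univ, hproj.trace, LinearMap.trace_one] at htrace
  exact_mod_cast htrace

section ExteriorAlgebra

variable {R M : Type*} [CommRing R] [AddCommGroup M] [Module R M]

theorem ExteriorAlgebra.contractLeft_add_mulLeft_anticomm (d d' : Dual R M) (m m' : M) :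
    (CliffordAlgebra.contractLeft d + LinearMap.mulLeft R (ExteriorAlgebra.ι R m)) *
        (CliffordAlgebra.contractLeft d' + LinearMap.mulLeft R (ExteriorAlgebra.ι R m')) +
      (CliffordAlgebra.contractLeft d' + LinearMap.mulLeft R (ExteriorAlgebra.ι R m')) *
        (CliffordAlgebra.contractLeft d + LinearMap.mulLeft R (ExteriorAlgebra.ι R m)) =
      (d m' + d' m) • (1 : Module.End R (ExteriorAlgebra R M)) := by
  refine LinearMap.ext fun x => ?_
  simp only [add_mul, mul_add, LinearMap.add_apply, Module.End.mul_apply, LinearMap.mulLeft_apply,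
    LinearMap.smul_apply, Module.End.one_apply, CliffordAlgebra.contractLeft_ι_mul]
  rw [CliffordAlgebra.contractLeft_comm d d', ← mul_assoc, ← mul_assoc,
    CliffordAlgebra.ι_mul_ι_comm_of_isOrtho (.all m m'), neg_mul]
  simp only [add_smul]
  abel

instance ExteriorAlgebra.instModuleFinite [Free R M] [Module.Finite R M] :
    Module.Finite R (ExteriorAlgebra R M) :=
  letI : LinearOrder (Free.ChooseBasisIndex R M) := IsWellOrder.linearOrder WellOrderingRel
  .of_basis (Free.chooseBasis R M).ExteriorAlgebra

theorem ExteriorAlgebra.finrank_eq [Nontrivial R] [Free R M] [Module.Finite R M] :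
    finrank R (ExteriorAlgebra R M) = 2 ^ finrank R M := by
  let : LinearOrder (Free.ChooseBasisIndex R M) := IsWellOrder.linearOrder WellOrderingRel
  rw [finrank_eq_card_basis (Free.chooseBasis R M).ExteriorAlgebra, Fintype.card_finset,
    finrank_eq_card_chooseBasisIndex]

end ExteriorAlgebra

theorem dOp_eq_contractLeft_add_mulLeft (n : ℕ) (p : (Fin n → ℂ) × (Fin n → ℂ)) :
    dOp n p = CliffordAlgebra.contractLeft (∑ t, p.1 t • LinearMap.proj t) +
      LinearMap.mulLeft ℂ (ExteriorAlgebra.ι ℂ p.2) := by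
  refine LinearMap.ext fun x => ?_
  conv_rhs => rw [← Finset.univ_sum_single p.2]
  simp only [dOp, Dop, Xop, Finset.sum_add_distrib, LinearMap.add_apply, LinearMap.sum_apply,
    LinearMap.smul_apply, LinearMap.mulLeft_apply, map_sum, map_smul, Finset.sum_mul, add_right_inj]
  refine Finset.sum_congr rfl fun t _ => ?_
  rw [← smul_mul_assoc, ← map_smul, ← Pi.single_smul, smul_eq_mul, mul_one]

theorem dOp_mul_add_mul_swap (n : ℕ) (p q : (Fin n → ℂ) × (Fin n → ℂ)) :
    dOp n p * dOp n q + dOp n q * dOp n p = Bform n p q • 1 := by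
  rw [dOp_eq_contractLeft_add_mulLeft, dOp_eq_contractLeft_add_mulLeft,
    ExteriorAlgebra.contractLeft_add_mulLeft_anticomm]
  simp [Bform, Finset.sum_add_distrib]

theorem exists_Bform_eq (n : ℕ) (φ : Dual ℂ ((Fin n → ℂ) × (Fin n → ℂ))) :
    ∃ q, ∀ p, Bform n p q = φ p := by
  refine ⟨(fun t => φ (0, Pi.single t 1), fun t => φ (Pi.single t 1, 0)), fun p => ?_⟩
  have hp : φ p = (φ ∘ₗ LinearMap.inl ℂ _ _) p.1 + (φ ∘ₗ LinearMap.inr ℂ _ _) p.2 := by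
    simp [← map_add]
  rw [hp, LinearMap.pi_apply_eq_sum_univ, LinearMap.pi_apply_eq_sum_univ, ← Finset.sum_add_distrib]
  have hsingle (t : Fin n) : (fun j => if t = j then (1 : ℂ) else 0) = Pi.single t 1 :=
    funext fun j => by simp [Pi.single_apply, eq_comm]
  simp [Bform, hsingle, mul_comm]

theorem isCAR_dOp {n : ℕ} {ι : Type*} [DecidableEq ι] {f g : ι → (Fin n → ℂ) × (Fin n → ℂ)}
    (hf : ∀ i j, Bform n (f i) (f j) = 0)
    (hfg : ∀ i j, Bform n (f i) (g j) = if i = j then 1 else 0) :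
    IsCAR (fun i => dOp n (f i)) (fun i => dOp n (g i)) where
  mul_self i := by
    have h := dOp_mul_add_mul_swap n (f i) (f i)
    rw [hf, zero_smul, ← two_smul ℂ] at h
    exact (smul_eq_zero.1 h).resolve_left two_ne_zero
  anticomm i j _ := by rw [dOp_mul_add_mul_swap, hf, zero_smul]
  anticomm_partner i j hij := by rw [dOp_mul_add_mul_swap, hfg, if_neg hij, zero_smul]
  anticomm_partner_self i := by rw [dOp_mul_add_mul_swap, hfg, if_pos rfl, one_smul]

theorem Module.Basis.exists_Bform_dual {n : ℕ} {V : Submodule ℂ ((Fin n → ℂ) × (Fin n → ℂ))}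
    {ι : Type*} [DecidableEq ι] (b : Basis ι ℂ V) :
    ∃ g : ι → (Fin n → ℂ) × (Fin n → ℂ), ∀ i j, Bform n (b i) (g j) = if i = j then 1 else 0 := by
  choose φ hφ using fun j => LinearMap.exists_extend (b.coord j)
  choose g hg using fun j => exists_Bform_eq n (φ j)
  refine ⟨g, fun i j => ?_⟩
  rw [hg, ← V.subtype_apply, ← LinearMap.comp_apply, hφ, Basis.coord_apply, Basis.repr_self,
    Finsupp.single_apply]

theorem annihilated_elements_proportional_general
    (n : ℕ) (V : Submodule ℂ ((Fin n → ℂ) × (Fin n → ℂ)))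
    (hiso : ∀ p ∈ V, ∀ q ∈ V, Bform n p q = 0)
    (hdim : Module.finrank ℂ ↥V = n)
    (w₁ w₂ : GA n) (hw₁ : w₁ ≠ 0) (hw₂ : w₂ ≠ 0)
    (hann₁ : ∀ p ∈ V, dOp n p w₁ = 0) (hann₂ : ∀ p ∈ V, dOp n p w₂ = 0) :
    ∃ c : ℂ, c ≠ 0 ∧ w₂ = c • w₁ := by
  let b := Module.finBasisOfFinrankEq ℂ V hdim
  obtain ⟨g, hg⟩ := b.exists_Bform_dual
  have hcar := isCAR_dOp (fun i j => hiso _ (b i).2 _ (b j).2) hg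
  have hW := hcar.two_pow_card_mul_finrank_iInf_ker
  rw [Fintype.card_fin, ExteriorAlgebra.finrank_eq, finrank_fin_fun,
    mul_eq_left₀ (by positivity)] at hW
  have hmem (w : GA n) (hw : ∀ p ∈ V, dOp n p w = 0) : w ∈ ⨅ i, LinearMap.ker (dOp n (b i)) :=
    (Submodule.mem_iInf _).2 fun i => hw _ (b i).2
  obtain ⟨c, hc⟩ := (finrank_eq_one_iff_of_nonzero' ⟨w₁, hmem w₁ hann₁⟩
    (by simpa using hw₁)).1 hW ⟨w₂, hmem w₂ hann₂⟩
  have hc' : c • w₁ = w₂ := congrArg Subtype.val hc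
  refine ⟨c, ?_, hc'.symm⟩
  rintro rfl
  exact hw₂ (by simpa using hc'.symm)

/-- two nonzero elements of `Λ(ℂⁿ)` annihilated by all operators coming
from one maximal isotropic subspace are proportional. -/
theorem annihilated_elements_proportional
    (n : ℕ) (hn : 1 ≤ n) (V : Submodule ℂ ((Fin n → ℂ) × (Fin n → ℂ)))
    (hiso : ∀ p ∈ V, ∀ q ∈ V, Bform n p q = 0)
    (hdim : Module.finrank ℂ ↥V = n)
    (w₁ w₂ : GA n) (hw₁ : w₁ ≠ 0) (hw₂ : w₂ ≠ 0)
    (hann₁ : ∀ p ∈ V, dOp n p w₁ = 0) (hann₂ : ∀ p ∈ V, dOp n p w₂ = 0) :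
    ∃ c : ℂ, c ≠ 0 ∧ w₂ = c • w₁ :=
  annihilated_elements_proportional_general n V hiso hdim w₁ w₂ hw₁ hw₂ hann₁ hann₂
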